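/- If r : [0,∞) → Ω is a solution of the α-flow that converges in ℝ^N, as t → +∞, to some r* ∈ Ω, then r* is a constant α-curvature metric, i.e. K_i(r*) = s_α(r*)·(r*_i)^α for every i (equivalently K_i(r*)/(r*_i)^α is the same for all i). In particular, (M,𝒯,I) then admits a constant α-curvature metric. -/
import Mathlib


open Real Filter Topology

namespace IDCP

variable {N : ℕ}

/-- The set of edges: 2-element subsets of vertices contained in some face. -/
def edges (Fc : Finset (Finset (Fin N))) : Finset (Finset (Fin N)) :=
  Fc.biUnion fun f => f.powersetCard 2

/-- `Fc` is the face set of a triangulation of a closed connected surface: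
every face has 3 vertices, every edge lies in exactly two faces, and the
1-skeleton is connected. -/
structure IsTriangulation (Fc : Finset (Finset (Fin N))) : Prop where
  card3 : ∀ f ∈ Fc, f.card = 3
  edge2 : ∀ e ∈ edges Fc, (Fc.filter fun f => e ⊆ f).card = 2
  conn : (SimpleGraph.fromRel fun i j => ({i, j} : Finset (Fin N)) ∈ edges Fc).Connected

/-- Euler characteristic χ(M) = N − |E| + |F|. -/
def chi (Fc : Finset (Finset (Fin N))) : ℤ :=
  (N : ℤ) - ((edges Fc).card : ℤ) + (Fc.card : ℤ)

/-- Edge length l_ij = √(r_i² + r_j² + 2 r_i r_j I_{ij}). -/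
noncomputable def len (I : Finset (Fin N) → ℝ) (r : Fin N → ℝ) (i j : Fin N) : ℝ :=
  Real.sqrt (r i ^ 2 + r j ^ 2 + 2 * r i * r j * I {i, j})

/-- The cosine of the inner angle at `i` in triangle `{i,j,k}`. -/
noncomputable def cosAng (I : Finset (Fin N) → ℝ) (r : Fin N → ℝ) (i j k : Fin N) : ℝ :=
  (len I r i j ^ 2 + len I r i k ^ 2 - len I r j k ^ 2) / (2 * len I r i j * len I r i k)

/-- The auxiliary function Λ. -/
noncomputable def Lam (x : ℝ) : ℝ :=
  if x ≤ -1 then π else if x ≤ 1 then Real.arccos x else 0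

/-- Discrete Gaussian curvature K_i = 2π − Σ_{{i,j,k}∈F} θ_i^{jk}.  Every face
containing `i` appears exactly twice (once for each ordering of `j,k`), whence
the factor 1/2. -/
noncomputable def K (Fc : Finset (Finset (Fin N))) (I : Finset (Fin N) → ℝ)
    (r : Fin N → ℝ) (i : Fin N) : ℝ :=
  2 * π - (1 / 2) * ∑ j, ∑ k,
    (if ({i, j, k} : Finset (Fin N)) ∈ Fc then Real.arccos (cosAng I r i j k) else 0)

/-- Extended curvature K̃_i = 2π − Σ θ̃_i^{jk}, using the generalized angles Λ. -/
noncomputable def Kt (Fc : Finset (Finset (Fin N))) (I : Finset (Fin N) → ℝ)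
    (r : Fin N → ℝ) (i : Fin N) : ℝ :=
  2 * π - (1 / 2) * ∑ j, ∑ k,
    (if ({i, j, k} : Finset (Fin N)) ∈ Fc then Lam (cosAng I r i j k) else 0)

/-- The set Ω of inversive distance circle packing metrics. -/
def Omega (Fc : Finset (Finset (Fin N))) (I : Finset (Fin N) → ℝ) : Set (Fin N → ℝ) :=
  {r | (∀ i, 0 < r i) ∧ ∀ i j k : Fin N, ({i, j, k} : Finset (Fin N)) ∈ Fc →
    len I r j k < len I r i j + len I r i k}

/-- s_α = 2πχ(M)/‖r‖_α^α. -/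
noncomputable def sA (Fc : Finset (Finset (Fin N))) (α : ℝ) (r : Fin N → ℝ) : ℝ :=
  2 * π * (chi Fc : ℝ) / ∑ j, r j ^ α

/-- Back from u-coordinates: r_i = e^{u_i}. -/
noncomputable def rOf (u : Fin N → ℝ) : Fin N → ℝ := fun i => Real.exp (u i)

/-- ln Ω, the image of Ω under the coordinate change r ↦ u, u_i = ln r_i. -/
def lnOmega (Fc : Finset (Finset (Fin N))) (I : Finset (Fin N) → ℝ) : Set (Fin N → ℝ) :=
  {u | rOf u ∈ Omega Fc I}

/-- `u` solves the α-flow du_i/dt = s_α r_i^α − K_i on the time set `D`,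
staying in ln Ω. -/
def IsFlowSol (Fc : Finset (Finset (Fin N))) (I : Finset (Fin N) → ℝ) (α : ℝ)
    (D : Set ℝ) (u : ℝ → Fin N → ℝ) : Prop :=
  ∀ t ∈ D, rOf (u t) ∈ Omega Fc I ∧
    ∀ i, HasDerivWithinAt (fun s => u s i)
      (sA Fc α (rOf (u t)) * rOf (u t) i ^ α - K Fc I (rOf (u t)) i) D t

/-- `u` solves the extended α-flow du_i/dt = s_α r_i^α − K̃_i on the time set `D`. -/
def IsExtFlowSol (Fc : Finset (Finset (Fin N))) (I : Finset (Fin N) → ℝ) (α : ℝ)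
    (D : Set ℝ) (u : ℝ → Fin N → ℝ) : Prop :=
  ∀ t ∈ D, ∀ i, HasDerivWithinAt (fun s => u s i)
      (sA Fc α (rOf (u t)) * rOf (u t) i ^ α - Kt Fc I (rOf (u t)) i) D t

/-- Lk(A): pairs (e,v) with both endpoints of e outside A, v ∈ A, and e,v spanning a face. -/
def Lk (Fc : Finset (Finset (Fin N))) (A : Finset (Fin N)) :
    Finset (Finset (Fin N) × Fin N) :=
  ((edges Fc) ×ˢ (Finset.univ : Finset (Fin N))).filter fun p =>
    (∀ x ∈ p.1, x ∉ A) ∧ p.2 ∈ A ∧ insert p.2 p.1 ∈ Fc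

/-- Euler characteristic χ(F_A) of the subcomplex spanned by A. -/
def chiSub (Fc : Finset (Finset (Fin N))) (A : Finset (Fin N)) : ℤ :=
  (A.card : ℤ) - (((edges Fc).filter (fun e => e ⊆ A)).card : ℤ)
    + ((Fc.filter (fun f => f ⊆ A)).card : ℤ)

/-- The lower bound −Σ_{(e,v)∈Lk(A)}(π − Λ(I_e)) + 2πχ(F_A) defining Y_A. -/
noncomputable def Ybound (Fc : Finset (Finset (Fin N))) (I : Finset (Fin N) → ℝ)
    (A : Finset (Fin N)) : ℝ :=
  -(∑ p ∈ Lk Fc A, (π - Lam (I p.1))) + 2 * π * (chiSub Fc A : ℝ)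

/-- x ∈ Y. -/
noncomputable def memY (Fc : Finset (Finset (Fin N))) (I : Finset (Fin N) → ℝ)
    (x : Fin N → ℝ) : Prop :=
  (∑ i, x i) = 2 * π * (chi Fc : ℝ) ∧
    ∀ A : Finset (Fin N), A.Nonempty → A ≠ Finset.univ → Ybound Fc I A < ∑ i ∈ A, x i

/-- x ∈ Ȳ. -/
noncomputable def memYbar (Fc : Finset (Finset (Fin N))) (I : Finset (Fin N) → ℝ)
    (x : Fin N → ℝ) : Prop :=
  (∑ i, x i) = 2 * π * (chi Fc : ℝ) ∧
    ∀ A : Finset (Fin N), A.Nonempty → A ≠ Finset.univ → Ybound Fc I A ≤ ∑ i ∈ A, x i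

/-- If `g` has derivative `φ t` within `[0,∞)` at each `t ≥ 0`, `g → c` and `φ → L`
at `+∞`, then `L = 0`. -/
lemma deriv_limit_zero (g φ : ℝ → ℝ)
    (hg : ∀ t ∈ Set.Ici (0 : ℝ), HasDerivWithinAt g (φ t) (Set.Ici 0) t)
    {c L : ℝ} (hgc : Tendsto g atTop (nhds c)) (hφ : Tendsto φ atTop (nhds L)) :
    L = 0 := by
  by_contra hL
  have hL2 : 0 < |L| / 2 := by positivity
  obtain ⟨T0, hT0⟩ := (Metric.tendsto_atTop.mp hφ (|L| / 2) hL2)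
  set T : ℝ := max T0 0 with hT
  have hTnn : (0 : ℝ) ≤ T := le_max_right _ _
  -- key estimate: for s ≥ 0, (|L|/2) * s ≤ |g (T + s) - g T|
  have key : ∀ s : ℝ, 0 ≤ s → (|L| / 2) * s ≤ |g (T + s) - g T| := by
    intro s hs
    set f : ℝ → ℝ := fun t => g t - L * t with hf
    have hderiv : ∀ x ∈ Set.Icc T (T + s), HasDerivWithinAt f (φ x - L) (Set.Icc T (T + s)) x := by
      intro x hx
      have hx0 : x ∈ Set.Ici (0 : ℝ) := le_trans hTnn hx.1
      have hsub : Set.Icc T (T + s) ⊆ Set.Ici (0 : ℝ) := fun y hy => le_trans hTnn hy.1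
      have h1 : HasDerivWithinAt g (φ x) (Set.Icc T (T + s)) x := (hg x hx0).mono hsub
      have h2 : HasDerivWithinAt (fun t : ℝ => L * t) L (Set.Icc T (T + s)) x := by
        simpa using ((hasDerivAt_id x).const_mul L).hasDerivWithinAt
          (s := Set.Icc T (T + s))
      exact h1.sub h2
    have hbound : ∀ x ∈ Set.Icc T (T + s), ‖φ x - L‖ ≤ |L| / 2 := by
      intro x hx
      have : T0 ≤ x := le_trans (le_max_left _ _) hx.1
      have := hT0 x this
      rw [Real.dist_eq] at this
      simpa [Real.norm_eq_abs] using this.le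
    have hmvt := (convex_Icc T (T + s)).norm_image_sub_le_of_norm_hasDerivWithin_le
      hderiv hbound (Set.left_mem_Icc.mpr (by linarith)) (Set.right_mem_Icc.mpr (by linarith))
    have h3 : |g (T + s) - g T - L * s| ≤ |L| / 2 * s := by
      have : f (T + s) - f T = g (T + s) - g T - L * s := by simp [hf]; ring
      rw [Real.norm_eq_abs, Real.norm_eq_abs, this] at hmvt
      calc |g (T + s) - g T - L * s| ≤ |L| / 2 * |T + s - T| := hmvt
        _ = |L| / 2 * s := by rw [show T + s - T = s by ring, abs_of_nonneg hs]
    have h4 : |L * s| ≤ |g (T + s) - g T - L * s| + |g (T + s) - g T| := by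
      calc |L * s| = |(L * s - (g (T + s) - g T)) + (g (T + s) - g T)| := by ring_nf
        _ ≤ |L * s - (g (T + s) - g T)| + |g (T + s) - g T| := abs_add_le _ _
        _ = |g (T + s) - g T - L * s| + |g (T + s) - g T| := by rw [abs_sub_comm]
    have h5 : |L * s| = |L| * s := by rw [abs_mul, abs_of_nonneg hs]
    nlinarith [abs_nonneg (g (T + s) - g T)]
  -- but |g (T + s) - g T| converges, while (|L|/2) * s → ∞
  have h6 : Tendsto (fun s : ℝ => |g (T + s) - g T|) atTop (nhds |c - g T|) := by
    have h7 : Tendsto (fun s : ℝ => T + s) atTop atTop := tendsto_atTop_add_const_left _ _ tendsto_id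
    exact (continuous_abs.tendsto _).comp ((hgc.comp h7).sub_const (g T))
  have h8 : Tendsto (fun s : ℝ => |g (T + s) - g T|) atTop atTop := by
    apply tendsto_atTop_mono' _ _ (tendsto_id.const_mul_atTop hL2)
    filter_upwards [eventually_ge_atTop (0 : ℝ)] with s hs using key s hs
  exact not_tendsto_atTop_of_tendsto_nhds h6 h8

/-- Positivity of edge lengths. -/
lemma len_pos {I : Finset (Fin N) → ℝ} {r : Fin N → ℝ} {i j : Fin N}
    (hi : 0 < r i) (hj : 0 < r j) (hIij : 0 ≤ I {i, j}) : 0 < len I r i j := by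
  apply Real.sqrt_pos.mpr
  positivity

/-- Two distinct vertices of a face form an edge. -/
lemma face_edge {Fc : Finset (Finset (Fin N))} (hT : IsTriangulation Fc) {i j k : Fin N}
    (hf : ({i, j, k} : Finset (Fin N)) ∈ Fc) : ({i, j} : Finset (Fin N)) ∈ edges Fc := by
  have hcard := hT.card3 _ hf
  have hij : i ≠ j := by
    intro h
    rw [h] at hcard
    have : ({j, j, k} : Finset (Fin N)).card ≤ 2 := by
      calc ({j, j, k} : Finset (Fin N)).card = ({j, k} : Finset (Fin N)).card := by
            congr 1; simp [Finset.insert_idem]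
        _ ≤ 2 := by
            apply le_trans (Finset.card_insert_le _ _); simp
    omega
  refine Finset.mem_biUnion.mpr ⟨{i, j, k}, hf, Finset.mem_powersetCard.mpr ⟨?_, ?_⟩⟩
  · intro x hx; simp only [Finset.mem_insert, Finset.mem_singleton] at hx ⊢; tauto
  · rw [Finset.card_insert_of_notMem (by simpa using hij), Finset.card_singleton]

/-- Membership in a face is symmetric in the last two vertices. -/
lemma face_swap {Fc : Finset (Finset (Fin N))} {i j k : Fin N}
    (hf : ({i, j, k} : Finset (Fin N)) ∈ Fc) : ({i, k, j} : Finset (Fin N)) ∈ Fc := by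
  have : ({i, j, k} : Finset (Fin N)) = ({i, k, j} : Finset (Fin N)) := by
    ext x; simp; tauto
  rwa [this] at hf

/-- `len` is continuous in `r`. -/
lemma continuous_len (I : Finset (Fin N) → ℝ) (i j : Fin N) :
    Continuous (fun r : Fin N → ℝ => len I r i j) := by
  unfold len
  apply Real.continuous_sqrt.comp
  fun_prop

lemma continuousAt_F {Fc : Finset (Finset (Fin N))} (hT : IsTriangulation Fc)
    {I : Finset (Fin N) → ℝ} (hI : ∀ e ∈ edges Fc, 0 ≤ I e) (α : ℝ)
    {rstar : Fin N → ℝ} (hrs : rstar ∈ Omega Fc I) (i : Fin N) :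
    ContinuousAt (fun r : Fin N → ℝ => sA Fc α r * r i ^ α - K Fc I r i) rstar := by
  obtain ⟨hpos, _⟩ := hrs
  have hlen : ∀ a b c : Fin N, ({a, b, c} : Finset (Fin N)) ∈ Fc → 0 < len I rstar a b :=
    fun a b c hf => len_pos (hpos a) (hpos b) (hI _ (face_edge hT hf))
  have hK : ContinuousAt (fun r : Fin N → ℝ => K Fc I r i) rstar := by
    unfold K
    apply ContinuousAt.sub continuousAt_const
    apply ContinuousAt.mul continuousAt_const
    apply tendsto_finset_sum
    intro j _
    apply tendsto_finset_sum
    intro k _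
    by_cases hf : ({i, j, k} : Finset (Fin N)) ∈ Fc
    · simp only [if_pos hf]
      apply Real.continuous_arccos.continuousAt.comp
      unfold cosAng
      apply ContinuousAt.div
      · exact ((((continuous_len I i j).pow 2).add ((continuous_len I i k).pow 2)).sub
          ((continuous_len I j k).pow 2)).continuousAt
      · exact (((continuous_const.mul (continuous_len I i j)).mul
          (continuous_len I i k)).continuousAt)
      · have h1 := hlen i j k hf
        have h2 := hlen i k j (face_swap hf)
        positivity
    · simp only [if_neg hf]; exact continuousAt_const
  have hsA : ContinuousAt (fun r : Fin N → ℝ => sA Fc α r) rstar := by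
    unfold sA
    apply ContinuousAt.div continuousAt_const
    · apply tendsto_finset_sum
      intro j _
      exact (continuous_apply j).continuousAt.rpow_const (Or.inl (hpos j).ne')
    · have : ∀ j : Fin N, 0 < rstar j ^ α := fun j => Real.rpow_pos_of_pos (hpos j) α
      have := Finset.sum_pos (fun j _ => this j) ⟨i, Finset.mem_univ i⟩
      exact this.ne'
  have hpow : ContinuousAt (fun r : Fin N → ℝ => r i ^ α) rstar :=
    (continuous_apply i).continuousAt.rpow_const (Or.inl (hpos i).ne')
  exact (hsA.mul hpow).sub hK

/-- if a solution of the α-flow on [0,∞) converges in ℝ^N to some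
r* ∈ Ω, then r* has constant α-curvature: K_i(r*) = s_α(r*)·(r*_i)^α for all i. -/
theorem stmt3 {N : ℕ} (Fc : Finset (Finset (Fin N))) (hT : IsTriangulation Fc)
    (I : Finset (Fin N) → ℝ) (hI : ∀ e ∈ edges Fc, 0 ≤ I e) (α : ℝ)
    (u : ℝ → Fin N → ℝ) (hu : IsFlowSol Fc I α (Set.Ici 0) u)
    (rstar : Fin N → ℝ) (hrs : rstar ∈ Omega Fc I)
    (hconv : Tendsto (fun t => rOf (u t)) atTop (nhds rstar)) :
    ∀ i : Fin N, K Fc I rstar i = sA Fc α rstar * rstar i ^ α := by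
  intro i
  have hpos := hrs.1
  set F : (Fin N → ℝ) → ℝ := fun r => sA Fc α r * r i ^ α - K Fc I r i with hF
  have hFc : ContinuousAt F rstar := continuousAt_F hT hI α hrs i
  -- g (t) = u t i converges
  have h1 : Tendsto (fun t => rOf (u t) i) atTop (nhds (rstar i)) :=
    ((continuous_apply i).tendsto rstar).comp hconv
  have hgc : Tendsto (fun t => u t i) atTop (nhds (Real.log (rstar i))) := by
    have h2 : Tendsto (fun t => Real.log (rOf (u t) i)) atTop (nhds (Real.log (rstar i))) :=
      ((Real.continuousAt_log (hpos i).ne').tendsto).comp h1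
    refine h2.congr fun t => ?_
    simp [rOf, Real.log_exp]
  -- φ (t) = F (rOf (u t)) converges to F rstar
  have hφ : Tendsto (fun t => F (rOf (u t))) atTop (nhds (F rstar)) :=
    hFc.tendsto.comp hconv
  have hg : ∀ t ∈ Set.Ici (0 : ℝ), HasDerivWithinAt (fun s => u s i)
      (F (rOf (u t))) (Set.Ici 0) t := fun t ht => (hu t ht).2 i
  have h0 := deriv_limit_zero (fun t => u t i) (fun t => F (rOf (u t))) hg hgc hφ
  have : sA Fc α rstar * rstar i ^ α - K Fc I rstar i = 0 := h0
  linarith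

end IDCP
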